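/- arXiv:1205.5247 — 2 statements merged into one kernel-verified Lean document; each statement's English description precedes it below -/
import Mathlib

section
/- Let M → M' be a matroid perspective on a finite linearly ordered set E. Let B be independent in M and spanning in M', and let A satisfy B \ Int_{M'}(B) ⊆ A ⊆ B ∪ Ext_M(B). Then Ext_M(A) = Ext_M(B) \ A and Q_M(A) = Ext_M(B) ∩ A. -/
/-!
External activity has a closure description: `e ∈ Ext_M(B)` iff `e ∉ B` and `e` lies in the
closure of `B_{>e} = B ∩ (e, ∞)`. As `A ⊆ B ∪ Ext_M(B)`, every element of `A` above `e` lies in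
the closure of `B_{>e}`, so a circuit in `A ∪ {e}` with minimum `e` puts `e` into `Ext_M(B)`
(independence of `B` keeps `e` out of `B`).
Conversely, a circuit `C ⊆ B ∪ {e}` with minimum `e` avoids `B \ A`: an element `g` there is
internally active in `M'`, and a cocircuit of `M'` witnessing this would meet `C` in `{g}` alone,
which the perspective forbids.
-/

open Set

/-- `e` is the smallest element of `C`. -/
def SmallestIn {α : Type*} [LinearOrder α] (e : α) (C : Set α) : Prop :=
  e ∈ C ∧ ∀ f ∈ C, e ≤ f

/-- `C` is a circuit of `M`: a minimal dependent set. -/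
def IsCircuit {α : Type*} (M : Matroid α) (C : Set α) : Prop :=
  ¬ M.Indep C ∧ ∀ x ∈ C, M.Indep (C \ {x})

/-- A cocircuit is a circuit of the dual matroid. -/
def IsCocircuit {α : Type*} (M : Matroid α) (C : Set α) : Prop :=
  IsCircuit M✶ C

/-- `P_M(A)`: elements outside `A` that are smallest in some cocircuit avoiding `A`. -/
def Pset {α : Type*} [LinearOrder α] (M : Matroid α) (A : Set α) : Set α :=
  {e | e ∉ A ∧ ∃ C, IsCocircuit M C ∧ C ⊆ Aᶜ ∧ SmallestIn e C}

/-- `Q_M(A)`: elements of `A` that are smallest in some circuit contained in `A`. -/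
def Qset {α : Type*} [LinearOrder α] (M : Matroid α) (A : Set α) : Set α :=
  {e | e ∈ A ∧ ∃ C, IsCircuit M C ∧ C ⊆ A ∧ SmallestIn e C}

/-- Externally active elements of `A`. -/
def ExtSet {α : Type*} [LinearOrder α] (M : Matroid α) (A : Set α) : Set α :=
  {e | e ∉ A ∧ ∃ C, IsCircuit M C ∧ C ⊆ A ∪ {e} ∧ SmallestIn e C}

/-- Internally active elements of `A`. -/
def IntSet {α : Type*} [LinearOrder α] (M : Matroid α) (A : Set α) : Set α :=
  {e | e ∈ A ∧ ∃ C, IsCocircuit M C ∧ C ⊆ Aᶜ ∪ {e} ∧ SmallestIn e C}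

/-- The rank of a set: the largest cardinality of an independent subset. -/
noncomputable def rk {α : Type*} (M : Matroid α) (A : Set α) : ℕ :=
  sSup (Set.ncard '' {I | I ⊆ A ∧ M.Indep I})

/-- Matroid perspective (strong-map / quotient condition, form (MP3)). -/
def Perspective {α : Type*} (M M' : Matroid α) : Prop :=
  ∀ C D : Set α, IsCircuit M C → IsCocircuit M' D → (C ∩ D).ncard ≠ 1

/-- Rank codrop of a subset in a matroid perspective. -/
noncomputable def rcd {α : Type*} (M M' : Matroid α) (A : Set α) : ℕ :=
  ((rk M Set.univ : ℤ) - rk M' Set.univ - ((rk M A : ℤ) - rk M' A)).toNat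

lemma isCircuit_iff_matroid_isCircuit {α : Type*} {M : Matroid α} (hE : M.E = univ)
    {C : Set α} : IsCircuit M C ↔ M.IsCircuit C := by
  rw [Matroid.isCircuit_iff_dep_forall_sdiff_singleton_indep, Matroid.Dep, hE]
  simp [IsCircuit]

section LinearOrder

variable {α : Type*} [LinearOrder α]

lemma SmallestIn.sdiff_singleton_subset_Ioi {e : α} {C : Set α} (he : SmallestIn e C) :
    C \ {e} ⊆ Ioi e :=
  fun f hf => lt_of_le_of_ne (he.2 f hf.1) (Ne.symm hf.2)

lemma inter_Ioi_subset_of_subset_union_singleton {C X : Set α} {e : α} (hCX : C ⊆ X ∪ {e}) :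
    C ∩ Ioi e ⊆ X ∩ Ioi e :=
  fun _ ⟨hfC, hef⟩ => ⟨(hCX hfC).resolve_right hef.ne', hef⟩

variable {M : Matroid α}

lemma mem_closure_inter_Ioi_of_isCircuit (hE : M.E = univ) {C : Set α} {e : α}
    (hC : IsCircuit M C) (he : SmallestIn e C) : e ∈ M.closure (C ∩ Ioi e) :=
  M.closure_subset_closure (subset_inter sdiff_subset he.sdiff_singleton_subset_Ioi)
    (((isCircuit_iff_matroid_isCircuit hE).1 hC).mem_closure_sdiff_singleton_of_mem he.1)

theorem mem_extSet_iff (hE : M.E = univ) {B : Set α} {e : α} :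
    e ∈ ExtSet M B ↔ e ∉ B ∧ e ∈ M.closure (B ∩ Ioi e) := by
  constructor
  · rintro ⟨heB, C, hC, hCB, he⟩
    exact ⟨heB, M.closure_subset_closure (inter_Ioi_subset_of_subset_union_singleton hCB)
      (mem_closure_inter_Ioi_of_isCircuit hE hC he)⟩
  · rintro ⟨heB, hcl⟩
    obtain ⟨C, hCs, hC, heC⟩ :=
      Matroid.exists_isCircuit_of_mem_closure hcl fun he => lt_irrefl e he.2
    refine ⟨heB, C, (isCircuit_iff_matroid_isCircuit hE).2 hC, ?_, heC, ?_⟩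
    · rw [union_singleton]
      exact hCs.trans (insert_subset_insert inter_subset_left)
    · intro f hf
      rcases hCs hf with rfl | hf
      exacts [le_rfl, hf.2.le]

lemma inter_Ioi_subset_closure_of_subset_union_extSet (hE : M.E = univ) {B X : Set α}
    (hX : X ⊆ B ∪ ExtSet M B) (e : α) : X ∩ Ioi e ⊆ M.closure (B ∩ Ioi e) := by
  rintro f ⟨hfX, hef⟩
  rcases hX hfX with hfB | hfB
  · exact M.subset_closure _ (hE ▸ subset_univ _) ⟨hfB, hef⟩
  · exact M.closure_subset_closure (inter_subset_inter_right B (Ioi_subset_Ioi hef.le))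
      ((mem_extSet_iff hE).1 hfB).2

theorem mem_extSet_of_isCircuit_subset (hE : M.E = univ) {A B C : Set α} {e : α}
    (hB : M.Indep B) (hA : A ⊆ B ∪ ExtSet M B) (hC : IsCircuit M C) (hCA : C ⊆ A ∪ {e})
    (he : SmallestIn e C) : e ∈ ExtSet M B := by
  have hcl : e ∈ M.closure (B ∩ Ioi e) :=
    M.closure_subset_closure_of_subset_closure
      (inter_Ioi_subset_closure_of_subset_union_extSet hE hA e)
      (M.closure_subset_closure (inter_Ioi_subset_of_subset_union_singleton hCA)
        (mem_closure_inter_Ioi_of_isCircuit hE hC he))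
  refine (mem_extSet_iff hE).2 ⟨fun heB => hB.notMem_closure_sdiff_of_mem heB ?_, hcl⟩
  exact M.closure_subset_closure (fun _ hf => ⟨hf.1, hf.2.ne'⟩ : B ∩ Ioi e ⊆ B \ {e}) hcl

variable {M' : Matroid α}

lemma Perspective.eq_of_inter_subset_pair (h : Perspective M M') {C D : Set α} {e g : α}
    (hC : IsCircuit M C) (hD : IsCocircuit M' D) (he : SmallestIn e C) (hg : SmallestIn g D)
    (hgC : g ∈ C) (hCD : C ∩ D ⊆ {e, g}) : e = g := by
  have heD : e ∈ D := by
    by_contra heD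
    have hCD_eq : C ∩ D = {g} :=
      Subset.antisymm (fun x hx => (hCD hx).resolve_left (by rintro rfl; exact heD hx.2))
        (singleton_subset_iff.2 ⟨hgC, hg.1⟩)
    exact h C D hC hD (by rw [hCD_eq, ncard_singleton])
  exact le_antisymm (he.2 g hgC) (hg.2 e heD)

theorem Perspective.exists_isCircuit_of_mem_extSet (h : Perspective M M') {A B : Set α} {e : α}
    (hA : B \ IntSet M' B ⊆ A) (he : e ∈ ExtSet M B) :
    ∃ C, IsCircuit M C ∧ C ⊆ A ∪ {e} ∧ SmallestIn e C := by
  obtain ⟨heB, C, hC, hCB, he⟩ := he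
  refine ⟨C, hC, fun g hgC => ?_, he⟩
  rcases hCB hgC with hgB | rfl
  · by_contra hgA
    obtain ⟨-, D, hD, hDB, hg⟩ : g ∈ IntSet M' B :=
      by_contra fun hgI => hgA (Or.inl (hA ⟨hgB, hgI⟩))
    have hCD : C ∩ D ⊆ {e, g} := by
      rintro x ⟨hxC, hxD⟩
      rcases hCB hxC with hxB | hxe
      · exact Or.inr ((hDB hxD).resolve_left fun hx => hx hxB)
      · exact Or.inl hxe
    exact heB (h.eq_of_inter_subset_pair hC hD he hg hgC hCD ▸ hgB)
  · exact Or.inr rfl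

end LinearOrder

theorem interval_ExtSet_Qset_general {α : Type*} [LinearOrder α]
    (M M' : Matroid α) (hE : M.E = Set.univ)
    (h : Perspective M M') (B A : Set α)
    (hBi : M.Indep B)
    (hA1 : B \ IntSet M' B ⊆ A) (hA2 : A ⊆ B ∪ ExtSet M B) :
    ExtSet M A = ExtSet M B \ A ∧ Qset M A = ExtSet M B ∩ A := by
  have extB_of_isCircuit {e : α} {C : Set α} (hC : IsCircuit M C) (hCA : C ⊆ A ∪ {e})
      (he : SmallestIn e C) : e ∈ ExtSet M B :=
    mem_extSet_of_isCircuit_subset hE hBi hA2 hC hCA he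
  constructor
  · ext e
    exact ⟨fun ⟨heA, C, hC, hCA, he⟩ => ⟨extB_of_isCircuit hC hCA he, heA⟩,
      fun ⟨heB, heA⟩ => ⟨heA, h.exists_isCircuit_of_mem_extSet hA1 heB⟩⟩
  · ext e
    refine ⟨fun ⟨heA, C, hC, hCA, he⟩ =>
      ⟨extB_of_isCircuit hC (hCA.trans subset_union_left) he, heA⟩, fun ⟨heB, heA⟩ => ?_⟩
    obtain ⟨C, hC, hCA, he⟩ := h.exists_isCircuit_of_mem_extSet hA1 heB
    exact ⟨heA, C, hC, hCA.trans (union_subset subset_rfl (singleton_subset_iff.2 heA)), he⟩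

theorem interval_ExtSet_Qset {α : Type*} [Fintype α] [LinearOrder α]
    (M M' : Matroid α) (hE : M.E = Set.univ) (hE' : M'.E = Set.univ)
    (h : Perspective M M') (B A : Set α)
    (hBi : M.Indep B) (hBs : M'.Spanning B)
    (hA1 : B \ IntSet M' B ⊆ A) (hA2 : A ⊆ B ∪ ExtSet M B) :
    ExtSet M A = ExtSet M B \ A ∧ Qset M A = ExtSet M B ∩ A :=
  interval_ExtSet_Qset_general M M' hE h B A hBi hA1 hA2
end

section
/- Let M → M' be a matroid perspective on a finite linearly ordered set E. The intervals [B \ Int_{M'}(B), B ∪ Ext_M(B)], as B ranges over all subsets independent in M and spanning in M', form a partition of the Boolean lattice 2^E: every A ⊆ E lies in exactly one such interval. -/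
open Set

/-!
Put `N = M'✶`. Circuits of `M` and `N` never meet in exactly one element, `B` spans `M'` iff
`Bᶜ` is independent in `N`, and `Int_{M'}(B) = Ext_N(Bᶜ)`; so `B` is admissible for `A` iff
`B` is independent in `M` with `A ⊆ B ∪ Ext_M(B)` and `Bᶜ` is independent in `N` with
`Aᶜ ⊆ Bᶜ ∪ Ext_N(Bᶜ)`, a condition symmetric under `(M, A, B) ↔ (N, Aᶜ, Bᶜ)`.

The admissible set is `B = (A \ Q_M(A)) ∪ Q_N(Aᶜ)`. Every element of `A` is spanned by the
elements of `B` above it (descending induction), which makes the elements of `A \ B`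
externally active. A circuit inside `B` would either meet the `N`-circuit witnessing its
largest element of `Q_N(Aᶜ)` in that element alone, or lie in `A \ Q_M(A)` while its
smallest element is in `Q_M(A)`. For uniqueness, the largest element of
`B₁ ∆ B₂` would be externally active for one of them, and the circuit witnessing this must
leave the other through a still larger element of `B₁ ∆ B₂`.
-/

section Circuits

variable {α : Type*} {M : Matroid α} {C X : Set α}

lemma isCircuit_iff_matroid_isCircuit_s12 (hCE : C ⊆ M.E) : IsCircuit M C ↔ M.IsCircuit C := by
  simp only [Matroid.isCircuit_iff_dep_forall_sdiff_singleton_indep, Matroid.Dep, and_assoc,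
    hCE, true_and, IsCircuit]

lemma exists_isCircuit_subset_of_not_indep (hX : ¬ M.Indep X) (hXE : X ⊆ M.E) :
    ∃ C ⊆ X, IsCircuit M C :=
  have ⟨C, hCX, hC⟩ := Matroid.Dep.exists_isCircuit_subset ⟨hX, hXE⟩
  ⟨C, hCX, (isCircuit_iff_matroid_isCircuit_s12 hC.subset_ground).2 hC⟩

end Circuits

section Orthogonal

variable {α : Type*}

def CircuitsOrthogonal (M N : Matroid α) : Prop :=
  ∀ C D, IsCircuit M C → IsCircuit N D → (C ∩ D).ncard ≠ 1

lemma CircuitsOrthogonal.symm {M N : Matroid α} (h : CircuitsOrthogonal M N) :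
    CircuitsOrthogonal N M :=
  fun C D hC hD => inter_comm C D ▸ h D C hD hC

lemma CircuitsOrthogonal.inter_ne_singleton {M N : Matroid α} (h : CircuitsOrthogonal M N)
    {C D : Set α} (hC : IsCircuit M C) (hD : IsCircuit N D) (x : α) : C ∩ D ≠ {x} :=
  fun hCD => h C D hC hD (by rw [hCD, ncard_singleton])

end Orthogonal

section Construction

variable {α : Type*} [LinearOrder α] {M N : Matroid α} {A : Set α}

def IsExtCover (M : Matroid α) (A B : Set α) : Prop :=
  M.Indep B ∧ A ⊆ B ∪ ExtSet M B

/-- The set `(A \ Q_M(A)) ∪ P_{M'}(A)` of the paper, with `N = M'✶`. -/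
def dawsonBase (M N : Matroid α) (A : Set α) : Set α :=
  (A \ Qset M A) ∪ Qset N Aᶜ

lemma compl_dawsonBase (M N : Matroid α) (A : Set α) :
    (dawsonBase M N A)ᶜ = dawsonBase N M Aᶜ := by
  ext x
  have hQM : x ∈ Qset M A → x ∈ A := And.left
  have hQN : x ∈ Qset N Aᶜ → x ∉ A := And.left
  simp only [dawsonBase, compl_compl, mem_compl_iff, mem_union, mem_sdiff]
  tauto

lemma mem_closure_dawsonBase_inter_Ici [Finite α] (hE : M.E = univ) {f : α} (hf : f ∈ A) :
    f ∈ M.closure (dawsonBase M N A ∩ Ici f) := by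
  induction f using WellFoundedGT.induction with
  | _ f ih =>
    by_cases hfQ : f ∈ Qset M A
    · obtain ⟨-, C, hC, hCA, hfC, hfmin⟩ := hfQ
      have hspan : C \ {f} ⊆ M.closure (dawsonBase M N A ∩ Ici f) := fun x hx =>
        have hfx : f < x := (hfmin x hx.1).lt_of_ne' hx.2
        M.closure_subset_closure (inter_subset_inter_right _ (Ici_subset_Ici.2 hfx.le))
          (ih x hfx (hCA hx.1))
      exact M.closure_subset_closure_of_subset_closure hspan
        (((isCircuit_iff_matroid_isCircuit_s12 (hE ▸ subset_univ C)).1 hC).mem_closure_sdiff_singleton_of_mem hfC)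
    · exact M.mem_closure_of_mem ⟨Or.inl ⟨hf, hfQ⟩, le_rfl⟩ (hE ▸ subset_univ _)

lemma indep_dawsonBase [Finite α] (hE : M.E = univ) (hMN : CircuitsOrthogonal M N) :
    M.Indep (dawsonBase M N A) := by
  by_contra hdep
  obtain ⟨C, hCB, hC⟩ := exists_isCircuit_subset_of_not_indep hdep (hE ▸ subset_univ _)
  by_cases hCQ : (C ∩ Qset N Aᶜ).Nonempty
  · obtain ⟨x, hx, hxmax⟩ := exists_max_image _ id (toFinite _) hCQ
    obtain ⟨-, D, hD, hDA, hxD, hxmin⟩ := hx.2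
    refine hMN.inter_ne_singleton hC hD x (eq_singleton_iff_unique_mem.2 ⟨⟨hx.1, hxD⟩, ?_⟩)
    intro y ⟨hyC, hyD⟩
    have hyQ : y ∈ Qset N Aᶜ := (hCB hyC).resolve_left fun hy => hDA hyD hy.1
    exact (hxmax y ⟨hyC, hyQ⟩).antisymm (hxmin y hyD)
  · have hCA : C ⊆ A \ Qset M A := fun y hy =>
      (hCB hy).resolve_right fun hyQ => hCQ ⟨y, hy, hyQ⟩
    have hCne : C.Nonempty := nonempty_iff_ne_empty.2 fun h => hC.1 (h ▸ M.empty_indep)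
    obtain ⟨e, he, hemin⟩ := exists_min_image _ id (toFinite _) hCne
    exact (hCA he).2 ⟨(hCA he).1, C, hC, fun y hy => (hCA hy).1, he, hemin⟩

lemma subset_union_extSet_dawsonBase [Finite α] (hE : M.E = univ)
    (hind : M.Indep (dawsonBase M N A)) :
    A ⊆ dawsonBase M N A ∪ ExtSet M (dawsonBase M N A) := by
  set B := dawsonBase M N A
  intro e heA
  by_cases heB : e ∈ B
  · exact Or.inl heB
  have hIoi : B ∩ Ici e = B ∩ Ioi e := by
    ext x
    exact and_congr_right fun hx => ⟨fun h => h.lt_of_ne fun hxe => heB (hxe ▸ hx), le_of_lt⟩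
  have hecl : e ∈ M.closure (B ∩ Ioi e) := hIoi ▸ mem_closure_dawsonBase_inter_Ici hE heA
  have hI : M.Indep (B ∩ Ioi e) := hind.subset inter_subset_left
  have heI : e ∉ B ∩ Ioi e := fun h => h.2.ne rfl
  have hfund := hI.fundCircuit_isCircuit hecl heI
  have hsub : M.fundCircuit e (B ∩ Ioi e) ⊆ insert e (B ∩ Ioi e) :=
    M.fundCircuit_subset_insert e _
  refine Or.inr ⟨heB, _, (isCircuit_iff_matroid_isCircuit_s12 hfund.subset_ground).2 hfund, fun x hx => ?_,
    M.mem_fundCircuit e _, fun x hx => ?_⟩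
  · rcases hsub hx with rfl | hx
    exacts [Or.inr rfl, Or.inl hx.1]
  · rcases hsub hx with rfl | hx
    exacts [le_rfl, hx.2.le]

lemma isExtCover_dawsonBase [Finite α] (hE : M.E = univ) (hMN : CircuitsOrthogonal M N) :
    IsExtCover M A (dawsonBase M N A) :=
  ⟨indep_dawsonBase hE hMN, subset_union_extSet_dawsonBase hE (indep_dawsonBase hE hMN)⟩

end Construction

section Uniqueness

variable {α : Type*} [LinearOrder α] {M N : Matroid α} {A B₁ B₂ : Set α} {e : α}

lemma IsExtCover.mem_of_mem_indep (h₂ : IsExtCover M A B₂) (h₁ : M.Indep B₁) (heA : e ∈ A)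
    (he₁ : e ∈ B₁) (hbelow : ∀ f ∈ B₂ \ B₁, f ≤ e) : e ∈ B₂ := by
  by_contra he₂
  obtain ⟨-, C, hC, hCB, heC, hemin⟩ := (h₂.2 heA).resolve_left he₂
  obtain ⟨f, hfC, hfB₁⟩ := not_subset.1 fun hCB₁ => hC.1 (h₁.subset hCB₁)
  have hfe : f ≠ e := fun h => hfB₁ (h ▸ he₁)
  have hfB₂ : f ∈ B₂ := (hCB hfC).resolve_right hfe
  exact hfe ((hbelow f ⟨hfB₂, hfB₁⟩).antisymm (hemin f hfC))

lemma notMem_sdiff_of_forall_symmDiff_le (h₁ : IsExtCover M A B₁) (h₁' : IsExtCover N Aᶜ B₁ᶜ)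
    (h₂ : IsExtCover M A B₂) (h₂' : IsExtCover N Aᶜ B₂ᶜ) (hmax : ∀ f ∈ symmDiff B₁ B₂, f ≤ e) :
    e ∉ B₁ \ B₂ := by
  rintro ⟨he₁, he₂⟩
  have hbelow : ∀ f ∈ B₂ \ B₁, f ≤ e := fun f hf => hmax f (Or.inr hf)
  by_cases heA : e ∈ A
  · exact he₂ (h₂.mem_of_mem_indep h₁.1 heA he₁ hbelow)
  · exact h₁'.mem_of_mem_indep h₂'.1 heA he₂
      (fun f hf => hbelow f ⟨not_not.1 hf.2, hf.1⟩) he₁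

lemma eq_of_isExtCover [Finite α] (h₁ : IsExtCover M A B₁) (h₁' : IsExtCover N Aᶜ B₁ᶜ)
    (h₂ : IsExtCover M A B₂) (h₂' : IsExtCover N Aᶜ B₂ᶜ) : B₁ = B₂ := by
  by_contra hne
  obtain ⟨e, he, hmax⟩ := exists_max_image _ id (toFinite _) (symmDiff_nonempty.2 hne)
  rcases he with he | he
  · exact notMem_sdiff_of_forall_symmDiff_le h₁ h₁' h₂ h₂' hmax he
  · exact notMem_sdiff_of_forall_symmDiff_le h₂ h₂' h₁ h₁' (symmDiff_comm B₁ B₂ ▸ hmax) he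

end Uniqueness

theorem existsUnique_isExtCover {α : Type*} [Finite α] [LinearOrder α] {M N : Matroid α}
    (hE : M.E = univ) (hEN : N.E = univ) (hMN : CircuitsOrthogonal M N) (A : Set α) :
    ∃! B, IsExtCover M A B ∧ IsExtCover N Aᶜ Bᶜ :=
  ⟨dawsonBase M N A,
    ⟨isExtCover_dawsonBase hE hMN, compl_dawsonBase M N A ▸ isExtCover_dawsonBase hEN hMN.symm⟩,
    fun _ hB => eq_of_isExtCover hB.1 hB.2 (isExtCover_dawsonBase hE hMN)
      (compl_dawsonBase M N A ▸ isExtCover_dawsonBase hEN hMN.symm)⟩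

lemma intSet_eq_extSet_dual_compl {α : Type*} [LinearOrder α] (M : Matroid α) (B : Set α) :
    IntSet M B = ExtSet M✶ Bᶜ := by
  ext e
  simp only [IntSet, ExtSet, IsCocircuit, mem_ofPred_eq, mem_compl_iff, not_not]

lemma spanning_iff_dual_indep_compl {α : Type*} {M : Matroid α} (hE : M.E = univ) (B : Set α) :
    M.Spanning B ↔ M✶.Indep Bᶜ := by
  rw [Matroid.spanning_iff_compl_coindep (hE ▸ subset_univ B), hE, ← compl_eq_univ_sdiff]

theorem dawson_partition_perspective {α : Type*} [Fintype α] [LinearOrder α]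
    (M M' : Matroid α) (hE : M.E = Set.univ) (hE' : M'.E = Set.univ)
    (h : Perspective M M') (A : Set α) :
    ∃! B : Set α, (M.Indep B ∧ M'.Spanning B) ∧
      B \ IntSet M' B ⊆ A ∧ A ⊆ B ∪ ExtSet M B := by
  refine (existsUnique_congr fun B => ?_).2 (existsUnique_isExtCover (N := M'✶) hE hE' h A)
  rw [spanning_iff_dual_indep_compl hE', intSet_eq_extSet_dual_compl, ← compl_subset_compl,
    Set.compl_sdiff, union_comm]
  exact ⟨fun ⟨⟨hB, hB'⟩, hlow, hup⟩ => ⟨⟨hB, hup⟩, hB', hlow⟩,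
    fun ⟨⟨hB, hup⟩, hB', hlow⟩ => ⟨⟨hB, hB'⟩, hlow, hup⟩⟩
end
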